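/- Let $q$ be a real with $0 < q < 1$ and let $k$ be a positive integer. If $p_j = c\,q^j$ (geometric frequencies, $c>0$), then $\lim_{t\to\infty}\sum_j (e^{-tp_j} - e^{-2tp_j})$ exists and is finite if and only if $q = 2^{-1/k}$ for some positive integer $k$, in which case the limit equals $k$. -/

import Mathlib

/-!
Write `ψ x = e^{-x} - e^{-2x}`. If `q ^ k = 1/2` then `e^{-2 t c q^{j+k}} = e^{-t c q^j}`, so the
series telescopes to `k - ∑_{i<k} e^{-2 t c q^i}`, which tends to `k`.

Conversely, if `V t → v`, then along `t = s q^{-n}` the sums increase to the two-sided sum, so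
`∑_{m ∈ ℤ} ψ (s q^m) = v` for every `s > 0`. Hence `x ↦ ψ (q^x)` has constant `1`-periodization
and its Fourier transform vanishes at `1`. Substituting `t = e^{-u}`, this says that the Mellin
transform of `ψ` vanishes at `2πi/L`, `L = -log q`. That Mellin transform is `Γ(s) (1 - 2^{-s})`
(for `Re s > 0` from the Gamma integral, then at `Re s = 0` by continuity), and `Γ` has no zeros,
so `2^{2πi/L} = 1`, i.e. `log 2 = n L` for a positive integer `n`.
-/

open Real Filter MeasureTheory Set Finset Asymptotics
open scoped Topology ENNReal FourierTransform

/-- Variance of the indicator that a box receiving a Poisson(`x`) number of balls is occupied. -/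
noncomputable def occupancyVar (x : ℝ) : ℝ := exp (-x) - exp (-(2 * x))

lemma occupancyVar_nonneg {x : ℝ} (hx : 0 ≤ x) : 0 ≤ occupancyVar x :=
  sub_nonneg.2 <| exp_le_exp.2 <| by linarith

lemma occupancyVar_le_exp_neg (x : ℝ) : occupancyVar x ≤ exp (-x) :=
  sub_le_self _ (exp_pos _).le

lemma occupancyVar_le_self {x : ℝ} (hx : 0 ≤ x) : occupancyVar x ≤ x := by
  have h2 : exp (-(2 * x)) = exp (-x) * exp (-x) := by rw [← exp_add]; ring_nf
  have h1 : 1 - x ≤ exp (-x) := by linarith [add_one_le_exp (-x)]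
  have h0 : exp (-x) ≤ 1 := exp_le_one_iff.2 (by linarith)
  rw [occupancyVar, h2]
  nlinarith

@[fun_prop]
lemma continuous_occupancyVar : Continuous occupancyVar := by
  unfold occupancyVar; fun_prop

lemma Finset.sum_range_comp_add_sub {G : Type*} [AddCommGroup G] (f : ℕ → G) (n k : ℕ) :
    ∑ j ∈ range n, (f (j + k) - f j) = ∑ i ∈ range k, (f (n + i) - f i) := by
  have h := Finset.sum_range_add f n k
  rw [add_comm n k, Finset.sum_range_add f k n] at h
  simp only [Finset.sum_sub_distrib, add_comm _ k]
  linear_combination (norm := abel_nf) h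

lemma hasSum_occupancyVar_geometric {a q : ℝ} (ha : 0 ≤ a) (hq0 : 0 ≤ q) (hq1 : q < 1)
    {k : ℕ} (hk : 2 * q ^ k = 1) :
    HasSum (fun j => occupancyVar (a * q ^ j))
      (k - ∑ i ∈ range k, exp (-(2 * (a * q ^ i)))) := by
  set f : ℕ → ℝ := fun i => exp (-(2 * (a * q ^ i)))
  have hterm (j : ℕ) : occupancyVar (a * q ^ j) = f (j + k) - f j := by
    simp only [f, occupancyVar, pow_add]
    congr 2
    linear_combination (a * q ^ j) * hk
  have hf : Tendsto (fun n => ∑ i ∈ range k, f (n + i)) atTop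
      (𝓝 (∑ _i ∈ range k, 1)) := by
    refine tendsto_finsetSum _ fun i _ => ?_
    have hq : Tendsto (fun n : ℕ => q ^ (n + i)) atTop (𝓝 0) :=
      (tendsto_pow_atTop_nhds_zero_of_lt_one hq0 hq1).comp (tendsto_add_atTop_nat i)
    simpa using ((hq.const_mul a).const_mul 2).neg.rexp
  rw [hasSum_iff_tendsto_nat_of_nonneg fun j => occupancyVar_nonneg (by positivity)]
  simp only [hterm, Finset.sum_range_comp_add_sub f, Finset.sum_sub_distrib]
  simpa using hf.sub_const (∑ i ∈ range k, f i)

lemma tendsto_tsum_occupancyVar_geometric {c q : ℝ} (hc : 0 < c) (hq0 : 0 < q) (hq1 : q < 1)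
    {k : ℕ} (hk : 2 * q ^ k = 1) :
    Tendsto (fun t => ∑' j : ℕ, occupancyVar (t * (c * q ^ j))) atTop (𝓝 k) := by
  have hexp : Tendsto (fun t => ∑ i ∈ range k, exp (-(2 * (t * c * q ^ i)))) atTop
      (𝓝 (∑ _i ∈ range k, 0)) := by
    refine tendsto_finsetSum _ fun i _ => ?_
    have hr : 0 < 2 * (c * q ^ i) := by positivity
    exact tendsto_exp_atBot.comp <| tendsto_neg_atTop_atBot.comp <|
      (tendsto_id.atTop_mul_const hr).congr fun t => by simp only [id]; ring
  rw [← sub_zero (k : ℝ)]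
  refine (tendsto_const_nhds.sub (by simpa using hexp)).congr' ?_
  filter_upwards [eventually_ge_atTop 0] with t ht
  simpa only [mul_assoc] using
    (hasSum_occupancyVar_geometric (a := t * c) (by positivity) hq0.le hq1 hk).tsum_eq.symm

lemma hasSum_int_of_tendsto_tsum_comp_sub {f : ℤ → ℝ} (hf : ∀ m, 0 ≤ f m)
    (hs : Summable fun j : ℕ => f j) {v : ℝ}
    (h : Tendsto (fun n : ℕ => ∑' j : ℕ, f (j - n)) atTop (𝓝 v)) : HasSum f v := by
  have hshift (n : ℕ) : Summable fun j : ℕ => f (j - n) :=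
    (summable_nat_add_iff n).1 <| by simpa using hs
  have htail (n : ℕ) :
      ∑' j : ℕ, f (j - n) = ∑ i ∈ range n, f (-(i + 1)) + ∑' j : ℕ, f j := by
    induction n with
    | zero => simp
    | succ n ih =>
      rw [(hshift (n + 1)).tsum_eq_zero_add, Finset.sum_range_succ, add_comm _ (f _), add_assoc,
        ← ih]
      exact congrArg₂ (· + ·) (by push_cast; ring_nf) (tsum_congr fun j => by push_cast; ring_nf)
  have hneg : HasSum (fun i : ℕ => f (-(i + 1))) (v - ∑' j : ℕ, f j) := by
    rw [hasSum_iff_tendsto_nat_of_nonneg fun i => hf _]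
    refine (h.sub_const (∑' j : ℕ, f j)).congr fun n => ?_
    simp [htail]
  simpa using hs.hasSum.of_nat_of_neg_add_one hneg

lemma hasSum_occupancyVar_zpow_of_tendsto {c q v : ℝ} (hc : 0 < c) (hq0 : 0 < q) (hq1 : q < 1)
    (hV : Tendsto (fun t => ∑' j : ℕ, occupancyVar (t * (c * q ^ j))) atTop (𝓝 v))
    {s : ℝ} (hs : 0 < s) : HasSum (fun m : ℤ => occupancyVar (s * q ^ m)) v := by
  refine hasSum_int_of_tendsto_tsum_comp_sub
    (fun m => occupancyVar_nonneg (by positivity)) ?_ ?_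
  · refine .of_nonneg_of_le (fun j => occupancyVar_nonneg (by positivity))
      (fun j => occupancyVar_le_self (by positivity)) ?_
    simpa using (summable_geometric_of_lt_one hq0.le hq1).mul_left s
  · have ht : Tendsto (fun n : ℕ => s / c * q⁻¹ ^ n) atTop atTop :=
      (tendsto_pow_atTop_atTop_of_one_lt (one_lt_inv₀ hq0 |>.2 hq1)).const_mul_atTop
        (by positivity)
    refine (hV.comp ht).congr fun n => tsum_congr fun j => ?_
    dsimp only [Function.comp_apply]
    rw [zpow_sub₀ hq0.ne', zpow_natCast, zpow_natCast, inv_pow]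
    field_simp

lemma lintegral_eq_tsum_setLIntegral_Ioc_comp_add_int (f : ℝ → ℝ≥0∞) :
    ∫⁻ x, f x = ∑' m : ℤ, ∫⁻ x in Ioc 0 1, f (x + m) := by
  rw [← setLIntegral_univ, ← iUnion_Ioc_add_intCast (0 : ℝ),
    lintegral_iUnion (fun _ => measurableSet_Ioc) (pairwise_disjoint_Ioc_add_intCast 0)]
  refine tsum_congr fun m => ?_
  rw [(measurePreserving_add_right volume (m : ℝ)).setLIntegral_comp_emb
    (measurableEmbedding_addRight _), image_add_const_Ioc, zero_add, add_comm 1]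

lemma intervalIntegral_exp_int_mul_two_pi_I_mul_eq_zero {n : ℤ} (hn : n ≠ 0) :
    ∫ x in (0 : ℝ)..1, Complex.exp (n * (2 * π * Complex.I) * x) = 0 := by
  rw [integral_exp_mul_complex (by simp [hn, pi_ne_zero]), Complex.ofReal_one, mul_one,
    Complex.exp_int_mul_two_pi_mul_I]
  simp

section Periodization

variable {g : ℝ → ℝ} {v : ℝ}

lemma tsum_setLIntegral_Ioc_comp_add_int_of_hasSum (hg : Measurable g) (hg0 : ∀ x, 0 ≤ g x)
    (hsum : ∀ x, HasSum (fun m : ℤ => g (x + m)) v) :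
    ∑' m : ℤ, ∫⁻ x in Ioc 0 1, ENNReal.ofReal (g (x + m)) = ENNReal.ofReal v := by
  rw [← lintegral_tsum fun m => by fun_prop]
  have h (x : ℝ) : ∑' m : ℤ, ENNReal.ofReal (g (x + m)) = ENNReal.ofReal v := by
    rw [← ENNReal.ofReal_tsum_of_nonneg (fun m => hg0 _) (hsum x).summable, (hsum x).tsum_eq]
  simp [h]

lemma integrable_of_hasSum_comp_add_int (hg : Measurable g) (hg0 : ∀ x, 0 ≤ g x)
    (hsum : ∀ x, HasSum (fun m : ℤ => g (x + m)) v) : Integrable g := by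
  refine ⟨hg.aestronglyMeasurable, ?_⟩
  rw [hasFiniteIntegral_iff_ofReal (ae_of_all _ hg0),
    lintegral_eq_tsum_setLIntegral_Ioc_comp_add_int,
    tsum_setLIntegral_Ioc_comp_add_int_of_hasSum hg hg0 hsum]
  exact ENNReal.ofReal_lt_top

lemma fourier_intCast_eq_zero_of_hasSum_comp_add_int (hg : Measurable g) (hg0 : ∀ x, 0 ≤ g x)
    (hsum : ∀ x, HasSum (fun m : ℤ => g (x + m)) v) {n : ℤ} (hn : n ≠ 0) :
    𝓕 (fun x => (g x : ℂ)) n = 0 := by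
  set c : ℂ := (-n : ℤ) * (2 * π * Complex.I)
  have hexp (x : ℝ) : Complex.exp (↑(-2 * π * x * n) * Complex.I) = Complex.exp (c * x) := by
    simp only [c]; push_cast; ring_nf
  have hper (x : ℝ) (m : ℤ) : Complex.exp (c * ↑(x + m)) = Complex.exp (c * x) := by
    rw [show c * ↑(x + m) = c * x + (-n * m : ℤ) * (2 * π * Complex.I) by
      simp only [c]; push_cast; ring,
      Complex.exp_add, Complex.exp_int_mul_two_pi_mul_I, mul_one]
  have hnorm (x y : ℝ) : ‖Complex.exp (c * x) * (y : ℂ)‖ = |y| := by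
    simp [Complex.norm_exp, c]
  have hint : Integrable fun x : ℝ => Complex.exp (c * x) * (g x : ℂ) := by
    refine (integrable_of_hasSum_comp_add_int hg hg0 hsum).mono' (by fun_prop) ?_
    exact ae_of_all _ fun x => by rw [hnorm, abs_of_nonneg (hg0 x)]
  have hsumI :
      ∑' m : ℤ, ∫⁻ x in Ioc (0 : ℝ) 1, ‖Complex.exp (c * x) * (g (x + m) : ℂ)‖ₑ ≠ ⊤ := by
    simp only [← ofReal_norm, hnorm, abs_of_nonneg (hg0 _),
      tsum_setLIntegral_Ioc_comp_add_int_of_hasSum hg hg0 hsum]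
    exact ENNReal.ofReal_ne_top
  calc 𝓕 (fun x => (g x : ℂ)) n = ∫ x : ℝ, Complex.exp (c * x) * (g x : ℂ) := by
        simp only [fourier_real_eq_integral_exp_smul, hexp, smul_eq_mul]
    _ = ∑' m : ℤ, ∫ x in (0 : ℝ)..1, Complex.exp (c * x) * (g (x + m) : ℂ) := by
        rw [hint.hasSum_intervalIntegral_comp_add_int.tsum_eq.symm]
        simp only [hper]
    _ = ∫ x in (0 : ℝ)..1, ∑' m : ℤ, Complex.exp (c * x) * (g (x + m) : ℂ) := by
        simp only [intervalIntegral.integral_of_le zero_le_one]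
        exact (integral_tsum (fun m => by fun_prop) hsumI).symm
    _ = ∫ x in (0 : ℝ)..1, Complex.exp (c * x) * v := by
        simp only [tsum_mul_left, ← Complex.ofReal_tsum, (hsum _).tsum_eq]
    _ = 0 := by
        rw [intervalIntegral.integral_mul_const,
          intervalIntegral_exp_int_mul_two_pi_I_mul_eq_zero (neg_ne_zero.2 hn), zero_mul]

end Periodization

lemma mellin_occupancyVar_of_re_pos {s : ℂ} (hs : 0 < s.re) :
    mellin (fun t => (occupancyVar t : ℂ)) s = Complex.Gamma s * (1 - 1 / 2 ^ s) := by
  have h := hasSum_mellin (a := ![1, -1]) (p := ![1, 2]) (F := fun t => (occupancyVar t : ℂ))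
    (fun i => by fin_cases i <;> simp) hs (fun t _ => ?_) (.of_finite)
  · rw [h.unique (hasSum_fintype _)]
    simp [Fin.sum_univ_two]
    ring
  · have : (occupancyVar t : ℂ) =
        ∑ i, (![1, -1] : Fin 2 → ℂ) i * (rexp (-(![1, 2] : Fin 2 → ℝ) i * t) : ℂ) := by
      simp [Fin.sum_univ_two, occupancyVar]
      ring_nf
    exact this ▸ hasSum_fintype _

lemma ne_neg_natCast_of_re_nonneg {s : ℂ} (hs : 0 ≤ s.re) (hs0 : s ≠ 0) (m : ℕ) : s ≠ -m := by
  rintro rfl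
  obtain rfl : m = 0 := by simpa using hs
  simp at hs0

lemma mellin_occupancyVar {s : ℂ} (hs : 0 ≤ s.re) (hs0 : s ≠ 0) :
    mellin (fun t => (occupancyVar t : ℂ)) s = Complex.Gamma s * (1 - 1 / 2 ^ s) := by
  have hmellin : ContinuousAt (mellin fun t => (occupancyVar t : ℂ)) s := by
    refine (mellin_differentiableAt_of_isBigO_rpow_exp (a := 1) (b := -1) one_pos
      ((by fun_prop : Continuous _).locallyIntegrable.locallyIntegrableOn _) ?_ ?_
      (by linarith)).continuousAt
    · refine IsBigO.of_bound 1 (eventually_ge_atTop 0 |>.mono fun t ht => ?_)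
      rw [Complex.norm_real, norm_of_nonneg (occupancyVar_nonneg ht),
        norm_of_nonneg (exp_pos _).le]
      simpa using occupancyVar_le_exp_neg t
    · refine IsBigO.of_bound 1 (eventually_mem_nhdsWithin.mono fun t (ht : 0 < t) => ?_)
      rw [Complex.norm_real, norm_of_nonneg (occupancyVar_nonneg ht.le), neg_neg, rpow_one,
        norm_of_nonneg ht.le, one_mul]
      exact occupancyVar_le_self ht.le
  have hrhs : ContinuousAt (fun s => Complex.Gamma s * (1 - 1 / 2 ^ s)) s :=
    (Complex.differentiableAt_Gamma s (ne_neg_natCast_of_re_nonneg hs hs0)).continuousAt.mul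
      (continuousAt_const.sub (continuousAt_const.div
        (continuousAt_const_cpow two_ne_zero) (by simp)))
  have hshift : Tendsto (fun σ : ℝ => s + σ) (𝓝[>] 0) (𝓝 s) :=
    ((continuous_const.add Complex.continuous_ofReal).tendsto' 0 s (by simp)).mono_left
      nhdsWithin_le_nhds
  refine tendsto_nhds_unique (hmellin.tendsto.comp hshift)
    ((hrhs.tendsto.comp hshift).congr' ?_)
  filter_upwards [self_mem_nhdsWithin] with σ (hσ : 0 < σ)
  exact (mellin_occupancyVar_of_re_pos (by simp; linarith)).symm

lemma exists_log_two_eq_nat_mul_of_mellin_eq_zero {L : ℝ} (hL : 0 < L)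
    (h : mellin (fun t => (occupancyVar t : ℂ)) (2 * π * Complex.I / L) = 0) :
    ∃ n : ℕ, 0 < n ∧ log 2 = n * L := by
  set w : ℂ := 2 * π * Complex.I / L
  have hw0 : w ≠ 0 := by simp [w, pi_ne_zero, hL.ne']
  have hwre : w.re = 0 := by simp [w, Complex.div_re]
  rw [mellin_occupancyVar hwre.ge hw0] at h
  have h2w : Complex.exp (Complex.log 2 * w) = 1 := by
    have hΓ := Complex.Gamma_ne_zero (ne_neg_natCast_of_re_nonneg hwre.ge hw0)
    rw [← Complex.cpow_def_of_ne_zero two_ne_zero]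
    simpa [hΓ, sub_eq_zero, inv_eq_one] using h
  obtain ⟨n, hn⟩ := Complex.exp_eq_one_iff.1 h2w
  have hlog : log 2 = n * L := by
    have : ((log 2 : ℝ) : ℂ) = n * L := by
      rw [show Complex.log 2 * w = Complex.log 2 / L * (2 * π * Complex.I) by ring] at hn
      have h2πI : (2 * π * Complex.I : ℂ) ≠ 0 := by simp [pi_ne_zero]
      rw [Complex.ofReal_log zero_le_two, ← div_eq_iff (by exact_mod_cast hL.ne')]
      simpa using mul_right_cancel₀ h2πI hn
    exact_mod_cast this
  have hn0 : 0 < n := by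
    have : (0 : ℝ) < n * L := hlog ▸ log_pos one_lt_two
    exact_mod_cast pos_of_mul_pos_left this hL.le
  lift n to ℕ using hn0.le
  exact ⟨n, by exact_mod_cast hn0, by exact_mod_cast hlog⟩

lemma exists_eq_two_rpow_of_tendsto {c q v : ℝ} (hc : 0 < c) (hq0 : 0 < q) (hq1 : q < 1)
    (hV : Tendsto (fun t => ∑' j : ℕ, occupancyVar (t * (c * q ^ j))) atTop (𝓝 v)) :
    ∃ k : ℕ, 0 < k ∧ q = 2 ^ (-1 / (k : ℝ)) := by
  set L := -log q
  have hL : 0 < L := neg_pos.2 (log_neg hq0 hq1)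
  have hsum (x : ℝ) : HasSum (fun m : ℤ => occupancyVar (q ^ (x + m))) v := by
    simpa [rpow_add hq0, rpow_intCast] using
      hasSum_occupancyVar_zpow_of_tendsto hc hq0 hq1 hV (rpow_pos_of_pos hq0 x)
  have hF : 𝓕 (fun x : ℝ => (occupancyVar (q ^ x) : ℂ)) ((1 : ℤ) : ℝ) = 0 :=
    fourier_intCast_eq_zero_of_hasSum_comp_add_int (by fun_prop)
      (fun x => occupancyVar_nonneg (rpow_pos_of_pos hq0 x).le) hsum one_ne_zero
  have hM : mellin (fun t => (occupancyVar t : ℂ)) (2 * π * Complex.I / L) = 0 := by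
    have h := mellin_comp_rpow (fun t => (occupancyVar t : ℂ)) (2 * π * Complex.I) L
    rw [mellin_eq_fourier] at h
    have hre : (2 * π * Complex.I).re = 0 := by simp
    have him : (2 * π * Complex.I).im / (2 * π) = ((1 : ℤ) : ℝ) := by simp [pi_ne_zero]
    have hfun : (fun u : ℝ => rexp (-(2 * π * Complex.I).re * u) •
        (occupancyVar (rexp (-u) ^ L) : ℂ)) = fun u => (occupancyVar (q ^ u) : ℂ) := by
      ext u
      rw [hre, ← exp_mul, rpow_def_of_pos hq0]
      simp [L, mul_comm]
    rw [him, hfun, hF, eq_comm, smul_eq_zero] at h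
    simpa [hL.ne'] using h
  obtain ⟨n, hn, hlog⟩ := exists_log_two_eq_nat_mul_of_mellin_eq_zero hL hM
  refine ⟨n, hn, ?_⟩
  rw [rpow_def_of_pos two_pos, hlog,
    show (n : ℝ) * L * (-1 / n) = log q by field_simp; simp [L], exp_log hq0]

theorem stmt15 (c q : ℝ) (hc : 0 < c) (hq0 : 0 < q) (hq1 : q < 1)
    (p : ℕ → ℝ) (hp : ∀ j : ℕ, p j = c * q ^ (j + 1))
    (V : ℝ → ℝ)
    (hV : ∀ t : ℝ, V t = ∑' j : ℕ, (Real.exp (-(t * p j)) - Real.exp (-(2 * t * p j)))) :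
    ((∃ v : ℝ, Tendsto V atTop (nhds v)) ↔
      ∃ k : ℕ, 0 < k ∧ q = (2 : ℝ) ^ (-(1 : ℝ) / (k : ℝ))) ∧
    (∀ k : ℕ, 0 < k → q = (2 : ℝ) ^ (-(1 : ℝ) / (k : ℝ)) →
      Tendsto V atTop (nhds (k : ℝ))) := by
  have hVeq : V = fun t => ∑' j : ℕ, occupancyVar (t * (c * q * q ^ j)) := by
    ext t
    simp only [hV, hp, occupancyVar, pow_succ]
    congr! 4 <;> ring
  have hlim (k : ℕ) (hk : 0 < k) (hqk : q = (2 : ℝ) ^ (-(1 : ℝ) / (k : ℝ))) :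
      Tendsto V atTop (𝓝 k) := by
    have h2 : 2 * q ^ k = 1 := by
      rw [hqk, ← rpow_natCast, ← rpow_mul zero_le_two, div_mul_cancel₀ _ (by positivity),
        rpow_neg_one]
      norm_num
    exact hVeq ▸ tendsto_tsum_occupancyVar_geometric (by positivity) hq0 hq1 h2
  refine ⟨⟨fun ⟨v, hv⟩ => ?_, fun ⟨k, hk, hqk⟩ => ⟨k, hlim k hk hqk⟩⟩, hlim⟩
  exact exists_eq_two_rpow_of_tendsto (mul_pos hc hq0) hq0 hq1 (hVeq ▸ hv)
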